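/- arXiv:1203.1809 — 3 statements merged into one kernel-verified Lean document; each statement's English description precedes it below -/
import Mathlib

section
/- A Groves mechanism r = (r_1,…,r_n) is non-deficit and individually undominated (among non-deficit Groves mechanisms) if and only if for all agents i and all type profiles θ: r_i(θ_{-i}) = inf_{θ'_i ∈ Θ_i} { VCG(θ'_i,θ_{-i}) − Σ_{j≠i} r_j(θ'_{-j}) }, where θ' = (θ'_i, θ_{-i}) and θ'_{-j} denotes the types of agents other than j in θ', and the infimum is taken in ℝ (the set being infimized is assumed nonempty and bounded below). -/
/-!
Non-deficit alone already forces `r_i(θ_{-i}) ≤ inf_{θ'_i} {VCG(θ') − Σ_{j≠i} r_j(θ'_{-j})}`: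
evaluate the budget constraint at `θ' = (θ'_i, θ_{-i})` and use that `r_i` does not see `θ'_i`.
Raising `r_i` alone to this infimum keeps the mechanism Groves and non-deficit, so an undominated
`r` attains the bound. Conversely, if `r` attains it, every non-deficit Groves `r' ≥ r` satisfies
`r'_i ≤ inf {VCG − Σ_{j≠i} r'_j} ≤ inf {VCG − Σ_{j≠i} r_j} = r_i`, so nothing dominates `r`.
-/

noncomputable def VCGi {n : ℕ} {D : Type} [Fintype D] [Nonempty D]
    {Θ : Fin n → Type} (v : ∀ i, D → Θ i → ℝ) (f : (∀ i, Θ i) → D)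
    (i : Fin n) (θ : ∀ j, Θ j) : ℝ :=
  (Finset.univ.sup' Finset.univ_nonempty fun d =>
      ∑ j ∈ Finset.univ.erase i, v j d (θ j)) -
    ∑ j ∈ Finset.univ.erase i, v j (f θ) (θ j)

noncomputable def VCGtot {n : ℕ} {D : Type} [Fintype D] [Nonempty D]
    {Θ : Fin n → Type} (v : ∀ i, D → Θ i → ℝ) (f : (∀ i, Θ i) → D)
    (θ : ∀ j, Θ j) : ℝ :=
  ∑ i, VCGi v f i θ

open Finset Function

namespace Groves

variable {ι : Type*} [Fintype ι] [DecidableEq ι] {Θ : ι → Type*}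

/-- A redistribution `r_i : Θ_{-i} → ℝ` is encoded as a function of the whole type profile
that ignores agent `i`'s own type. -/
def IgnoresOwnType (r : ι → (∀ j, Θ j) → ℝ) : Prop :=
  ∀ (i : ι) (θ θ' : ∀ j, Θ j), (∀ j, j ≠ i → θ j = θ' j) → r i θ = r i θ'

def NonDeficit (B : (∀ j, Θ j) → ℝ) (r : ι → (∀ j, Θ j) → ℝ) : Prop :=
  ∀ θ : ∀ j, Θ j, ∑ i, r i θ ≤ B θ

def IndividuallyUndominated (B : (∀ j, Θ j) → ℝ) (r : ι → (∀ j, Θ j) → ℝ) : Prop :=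
  ¬ ∃ r' : ι → (∀ j, Θ j) → ℝ, IgnoresOwnType r' ∧ NonDeficit B r' ∧
    (∀ (i : ι) (θ : ∀ j, Θ j), r i θ ≤ r' i θ) ∧ ∃ (i : ι) (θ : ∀ j, Θ j), r i θ < r' i θ

def slackSet (B : (∀ j, Θ j) → ℝ) (r : ι → (∀ j, Θ j) → ℝ) (i : ι) (θ : ∀ j, Θ j) : Set ℝ :=
  {y : ℝ | ∃ x : Θ i, y = B (update θ i x) - ∑ j ∈ univ.erase i, r j (update θ i x)}

variable {B : (∀ j, Θ j) → ℝ} {r r' : ι → (∀ j, Θ j) → ℝ}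

theorem sub_sum_erase_mem_slackSet (i : ι) (θ : ∀ j, Θ j) :
    B θ - ∑ j ∈ univ.erase i, r j θ ∈ slackSet B r i θ :=
  ⟨θ i, by rw [update_eq_self]⟩

theorem slackSet_congr {i : ι} {θ θ' : ∀ j, Θ j} (h : ∀ j, j ≠ i → θ j = θ' j) :
    slackSet B r i θ = slackSet B r i θ' := by
  have hupdate : ∀ x : Θ i, update θ i x = update θ' i x := fun x => by
    funext k
    by_cases hk : k = i
    · subst hk
      simp only [update_self]
    · simp only [update_of_ne hk, h k hk]
  simp only [slackSet, hupdate]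

/-- With `r' = r` this is the upper bound that non-deficit alone imposes on `r i θ`. -/
theorem le_sInf_slackSet (hr' : IgnoresOwnType r') (hnd : NonDeficit B r')
    (hle : ∀ j θ, r j θ ≤ r' j θ) (i : ι) (θ : ∀ j, Θ j) :
    r' i θ ≤ sInf (slackSet B r i θ) := by
  refine le_csInf ⟨_, sub_sum_erase_mem_slackSet i θ⟩ ?_
  rintro _ ⟨x, rfl⟩
  have hown : r' i (update θ i x) = r' i θ := hr' i _ _ fun j hj => update_of_ne hj x θ
  have hbudget := hnd (update θ i x)
  rw [← sum_erase_add _ _ (mem_univ i)] at hbudget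
  have hothers : ∑ j ∈ univ.erase i, r j (update θ i x) ≤ ∑ j ∈ univ.erase i, r' j (update θ i x) :=
    sum_le_sum fun j _ => hle j _
  linarith

theorem nonDeficit_of_eq_sInf_slackSet (i : ι) (hbdd : ∀ θ, BddBelow (slackSet B r i θ))
    (heq : ∀ θ, r i θ = sInf (slackSet B r i θ)) : NonDeficit B r := by
  intro θ
  have hslack := csInf_le (hbdd θ) (sub_sum_erase_mem_slackSet i θ)
  rw [← heq θ] at hslack
  rw [← sum_erase_add _ _ (mem_univ i)]
  linarith

theorem ignoresOwnType_update_sInf_slackSet (hr : IgnoresOwnType r) (i : ι) :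
    IgnoresOwnType (update r i fun θ => sInf (slackSet B r i θ)) := by
  intro j θ θ' h
  by_cases hj : j = i
  · subst hj
    simp only [update_self, slackSet_congr h]
  · simp only [update_of_ne hj, hr j θ θ' h]

theorem slackSet_update_self (i : ι) (g : (∀ j, Θ j) → ℝ) :
    slackSet B (update r i g) i = slackSet B r i := by
  have hsum : ∀ θ, ∑ j ∈ univ.erase i, update r i g j θ = ∑ j ∈ univ.erase i, r j θ :=
    fun θ => sum_congr rfl fun j hj => by rw [update_of_ne (ne_of_mem_erase hj)]
  funext θ
  simp only [slackSet, hsum]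

theorem nonDeficit_update_sInf_slackSet (i : ι) (hbdd : ∀ θ, BddBelow (slackSet B r i θ)) :
    NonDeficit B (update r i fun θ => sInf (slackSet B r i θ)) :=
  nonDeficit_of_eq_sInf_slackSet i (by rwa [slackSet_update_self])
    (by simp only [slackSet_update_self, update_self, implies_true])

theorem le_update_sInf_slackSet (hr : IgnoresOwnType r) (hnd : NonDeficit B r) (i j : ι)
    (θ : ∀ j, Θ j) : r j θ ≤ update r i (fun θ => sInf (slackSet B r i θ)) j θ := by
  rcases eq_or_ne j i with rfl | hj
  · simpa only [update_self] using le_sInf_slackSet hr hnd (fun _ _ => le_rfl) j θ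
  · simp only [update_of_ne hj, le_refl]

theorem nonDeficit_and_individuallyUndominated_iff [Nonempty ι] (hr : IgnoresOwnType r)
    (hbdd : ∀ i θ, BddBelow (slackSet B r i θ)) :
    NonDeficit B r ∧ IndividuallyUndominated B r ↔ ∀ i θ, r i θ = sInf (slackSet B r i θ) := by
  constructor
  · rintro ⟨hnd, hundom⟩ i θ
    refine (le_sInf_slackSet hr hnd (fun _ _ => le_rfl) i θ).antisymm
      (not_lt.1 fun hlt => hundom ?_)
    exact ⟨_, ignoresOwnType_update_sInf_slackSet hr i, nonDeficit_update_sInf_slackSet i (hbdd i),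
      le_update_sInf_slackSet hr hnd i, i, θ, by rwa [update_self]⟩
  · intro heq
    refine ⟨nonDeficit_of_eq_sInf_slackSet (Classical.arbitrary ι) (hbdd _) (heq _), ?_⟩
    rintro ⟨r', hr', hnd', hle, i, θ, hlt⟩
    exact (hlt.trans_le ((le_sInf_slackSet hr' hnd' hle i θ).trans_eq (heq i θ).symm)).false

end Groves

theorem stmt_6_general {n : ℕ} (hn : 2 ≤ n) {D : Type} [Fintype D] [Nonempty D]
    {Θ : Fin n → Type}
    (v : ∀ i, D → Θ i → ℝ) (f : (∀ i, Θ i) → D)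
    (r : ∀ _ : Fin n, (∀ j, Θ j) → ℝ)
    (hind : ∀ (i : Fin n) (θ θ' : ∀ j, Θ j),
      (∀ j, j ≠ i → θ j = θ' j) → r i θ = r i θ')
    (hbdd : ∀ (i : Fin n) (θ : ∀ j, Θ j),
      BddBelow {y : ℝ | ∃ x : Θ i, y = VCGtot v f (Function.update θ i x) -
        ∑ j ∈ Finset.univ.erase i, r j (Function.update θ i x)}) :
    ((∀ θ : ∀ j, Θ j, ∑ i, r i θ ≤ VCGtot v f θ) ∧
      ¬ ∃ r' : ∀ _ : Fin n, (∀ j, Θ j) → ℝ,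
        (∀ (i : Fin n) (θ θ' : ∀ j, Θ j),
          (∀ j, j ≠ i → θ j = θ' j) → r' i θ = r' i θ') ∧
        (∀ θ : ∀ j, Θ j, ∑ i, r' i θ ≤ VCGtot v f θ) ∧
        (∀ (i : Fin n) (θ : ∀ j, Θ j), r i θ ≤ r' i θ) ∧
        (∃ (i : Fin n) (θ : ∀ j, Θ j), r i θ < r' i θ)) ↔
    (∀ (i : Fin n) (θ : ∀ j, Θ j),
      r i θ = sInf {y : ℝ | ∃ x : Θ i, y = VCGtot v f (Function.update θ i x) -
        ∑ j ∈ Finset.univ.erase i, r j (Function.update θ i x)}) := by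
  have : Nonempty (Fin n) := ⟨⟨0, by omega⟩⟩
  exact Groves.nonDeficit_and_individuallyUndominated_iff hind hbdd

theorem stmt_6 {n : ℕ} (hn : 2 ≤ n) {D : Type} [Fintype D] [Nonempty D]
    {Θ : Fin n → Type} [∀ i, Nonempty (Θ i)]
    (v : ∀ i, D → Θ i → ℝ) (f : (∀ i, Θ i) → D)
    (hf : ∀ (θ : ∀ j, Θ j) (d : D),
      ∑ i, v i d (θ i) ≤ ∑ i, v i (f θ) (θ i))
    (r : ∀ _ : Fin n, (∀ j, Θ j) → ℝ)
    (hind : ∀ (i : Fin n) (θ θ' : ∀ j, Θ j),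
      (∀ j, j ≠ i → θ j = θ' j) → r i θ = r i θ')
    (hbdd : ∀ (i : Fin n) (θ : ∀ j, Θ j),
      BddBelow {y : ℝ | ∃ x : Θ i, y = VCGtot v f (Function.update θ i x) -
        ∑ j ∈ Finset.univ.erase i, r j (Function.update θ i x)}) :
    ((∀ θ : ∀ j, Θ j, ∑ i, r i θ ≤ VCGtot v f θ) ∧
      ¬ ∃ r' : ∀ _ : Fin n, (∀ j, Θ j) → ℝ,
        (∀ (i : Fin n) (θ θ' : ∀ j, Θ j),
          (∀ j, j ≠ i → θ j = θ' j) → r' i θ = r' i θ') ∧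
        (∀ θ : ∀ j, Θ j, ∑ i, r' i θ ≤ VCGtot v f θ) ∧
        (∀ (i : Fin n) (θ : ∀ j, Θ j), r i θ ≤ r' i θ) ∧
        (∃ (i : Fin n) (θ : ∀ j, Θ j), r i θ < r' i θ)) ↔
    (∀ (i : Fin n) (θ : ∀ j, Θ j),
      r i θ = sInf {y : ℝ | ∃ x : Θ i, y = VCGtot v f (Function.update θ i x) -
        ∑ j ∈ Finset.univ.erase i, r j (Function.update θ i x)}) :=
  stmt_6_general hn v f r hind hbdd
end

section
/- Let r = (r_1,…,r_n) be a non-deficit Groves mechanism, let π be a permutation of {1,…,n} (a priority order, where π(i) is agent i's priority value and lower values mean higher priority), and let r^π be defined recursively by: for k = 1,…,n, setting i = π^{-1}(k), r^π_i(θ_{-i}) := inf_{θ'_i ∈ Θ_i} { VCG(θ'_i,θ_{-i}) − Σ_{j : π(j) > k} r_j(θ'_{-j}) − Σ_{j : π(j) < k} r^π_j(θ'_{-j}) }, where θ' = (θ'_i,θ_{-i}) and all these infima are assumed to exist in ℝ. Then r^π_i(θ_{-i}) ≥ r_i(θ_{-i}) for all agents i and all θ_{-i}. -/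
/-!
Process the agents in priority order, replacing `r j` by `rπ j` one agent at a time. Every
intermediate mixture still has total redistribution at most the VCG revenue, at every profile:
when agent `i` is replaced, the infimum defining `rπ i θ` is at most its value at the true type
`θ i`, which is exactly the revenue left over by the others. Applied at the profile
`update θ i x` just before agent `i` is replaced, the same bound says that `r i` (which ignores
`x`) is below every element of the set whose infimum is `rπ i θ`.
-/

open Finset

section MixedSum

variable {ι Ω : Type*} [Fintype ι]

/-- Stage `k` of the priority transform: agents of priority below `k` already use `rπ`. -/
def mixedSum (p : ι → ℕ) (r rπ : ι → Ω → ℝ) (k : ℕ) (θ : Ω) : ℝ :=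
  ∑ j with p j < k, rπ j θ + ∑ j with k ≤ p j, r j θ

variable {p : ι → ℕ} (r rπ : ι → Ω → ℝ)

theorem filter_le_eq_insert_filter_lt [DecidableEq ι] (hp : Function.Injective p) (i : ι) :
    univ.filter (fun j => p i ≤ p j) = insert i (univ.filter fun j => p i < p j) := by
  ext j
  simp [le_iff_eq_or_lt, hp.eq_iff, eq_comm]

theorem filter_lt_add_one_eq_insert_filter_lt [DecidableEq ι] (hp : Function.Injective p) (i : ι) :
    univ.filter (fun j => p j < p i + 1) = insert i (univ.filter fun j => p j < p i) := by
  ext j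
  simp [le_iff_eq_or_lt, hp.eq_iff, eq_comm]

theorem mixedSum_zero (θ : Ω) : mixedSum p r rπ 0 θ = ∑ j, r j θ := by
  simp [mixedSum]

theorem mixedSum_priority (hp : Function.Injective p) (i : ι) (θ : Ω) :
    mixedSum p r rπ (p i) θ =
      ∑ j with p j < p i, rπ j θ + (r i θ + ∑ j with p i < p j, r j θ) := by
  classical
  rw [mixedSum, filter_le_eq_insert_filter_lt hp, sum_insert (by simp)]

theorem mixedSum_priority_add_one (hp : Function.Injective p) (i : ι) (θ : Ω) :
    mixedSum p r rπ (p i + 1) θ =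
      rπ i θ + ∑ j with p j < p i, rπ j θ + ∑ j with p i < p j, r j θ := by
  classical
  simp only [mixedSum, filter_lt_add_one_eq_insert_filter_lt hp, Nat.add_one_le_iff]
  rw [sum_insert (by simp)]

theorem mixedSum_add_one_of_forall_ne {k : ℕ} (hk : ∀ j, p j ≠ k) (θ : Ω) :
    mixedSum p r rπ (k + 1) θ = mixedSum p r rπ k θ := by
  have hlt (j : ι) : p j < k + 1 ↔ p j < k := by have := hk j; omega
  have hle (j : ι) : k + 1 ≤ p j ↔ k ≤ p j := by have := hk j; omega
  simp only [mixedSum, hlt, hle]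

variable {r rπ}

theorem mixedSum_le (hp : Function.Injective p) {V : Ω → ℝ} (hr : ∀ θ, ∑ j, r j θ ≤ V θ)
    (hrπ : ∀ i θ, rπ i θ ≤ V θ - ∑ j with p i < p j, r j θ - ∑ j with p j < p i, rπ j θ)
    (k : ℕ) (θ : Ω) : mixedSum p r rπ k θ ≤ V θ := by
  induction k generalizing θ with
  | zero => rw [mixedSum_zero]; exact hr θ
  | succ k ih =>
    by_cases hk : ∃ i, p i = k
    · obtain ⟨i, rfl⟩ := hk
      rw [mixedSum_priority_add_one r rπ hp]
      linarith [hrπ i θ]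
    · push Not at hk
      rw [mixedSum_add_one_of_forall_ne r rπ hk]
      exact ih θ

end MixedSum

theorem stmt_7_general {n : ℕ} {D : Type} [Fintype D] [Nonempty D]
    {Θ : Fin n → Type}
    (v : ∀ i, D → Θ i → ℝ) (f : (∀ i, Θ i) → D)
    (r : ∀ _ : Fin n, (∀ j, Θ j) → ℝ)
    (hind : ∀ (i : Fin n) (θ θ' : ∀ j, Θ j),
      (∀ j, j ≠ i → θ j = θ' j) → r i θ = r i θ')
    (hnd : ∀ θ : ∀ j, Θ j, ∑ i, r i θ ≤ VCGtot v f θ)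
    (π : Equiv.Perm (Fin n))
    (rπ : ∀ _ : Fin n, (∀ j, Θ j) → ℝ)
    (hrπ : ∀ (i : Fin n) (θ : ∀ j, Θ j),
      IsGLB {y : ℝ | ∃ x : Θ i, y = VCGtot v f (Function.update θ i x) -
          ∑ j ∈ Finset.univ.filter (fun j => π i < π j), r j (Function.update θ i x) -
          ∑ j ∈ Finset.univ.filter (fun j => π j < π i), rπ j (Function.update θ i x)}
        (rπ i θ)) :
    ∀ (i : Fin n) (θ : ∀ j, Θ j), r i θ ≤ rπ i θ := by
  have hp : Function.Injective fun j => (π j : ℕ) := Fin.val_injective.comp π.injective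
  have hmixed := mixedSum_le hp hnd fun i θ => by
    simpa only [Fin.val_fin_lt] using (hrπ i θ).1 ⟨θ i, by rw [Function.update_eq_self]⟩
  intro i θ
  refine (hrπ i θ).2 ?_
  rintro _ ⟨x, rfl⟩
  have hri : r i θ = r i (Function.update θ i x) :=
    hind i _ _ fun j hj => (Function.update_of_ne hj x θ).symm
  have hstage := hmixed (π i) (Function.update θ i x)
  simp only [mixedSum_priority r rπ hp, Fin.val_fin_lt] at hstage
  linarith

theorem stmt_7 {n : ℕ} (hn : 2 ≤ n) {D : Type} [Fintype D] [Nonempty D]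
    {Θ : Fin n → Type} [∀ i, Nonempty (Θ i)]
    (v : ∀ i, D → Θ i → ℝ) (f : (∀ i, Θ i) → D)
    (hf : ∀ (θ : ∀ j, Θ j) (d : D),
      ∑ i, v i d (θ i) ≤ ∑ i, v i (f θ) (θ i))
    (r : ∀ _ : Fin n, (∀ j, Θ j) → ℝ)
    (hind : ∀ (i : Fin n) (θ θ' : ∀ j, Θ j),
      (∀ j, j ≠ i → θ j = θ' j) → r i θ = r i θ')
    (hnd : ∀ θ : ∀ j, Θ j, ∑ i, r i θ ≤ VCGtot v f θ)
    (π : Equiv.Perm (Fin n))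
    (rπ : ∀ _ : Fin n, (∀ j, Θ j) → ℝ)
    (hindπ : ∀ (i : Fin n) (θ θ' : ∀ j, Θ j),
      (∀ j, j ≠ i → θ j = θ' j) → rπ i θ = rπ i θ')
    (hrπ : ∀ (i : Fin n) (θ : ∀ j, Θ j),
      IsGLB {y : ℝ | ∃ x : Θ i, y = VCGtot v f (Function.update θ i x) -
          ∑ j ∈ Finset.univ.filter (fun j => π i < π j), r j (Function.update θ i x) -
          ∑ j ∈ Finset.univ.filter (fun j => π j < π i), rπ j (Function.update θ i x)}
        (rπ i θ)) :
    ∀ (i : Fin n) (θ : ∀ j, Θ j), r i θ ≤ rπ i θ :=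
  stmt_7_general v f r hind hnd π rπ hrπ
end

section
/- Let r = (r_1,…,r_n) be a Groves mechanism such that for every agent i and every θ_{-i} ∈ Θ_{-i} there exists b*_i ∈ Θ_i with VCG_i(b*_i, θ_{-i}) − r_i(θ_{-i}) = 0. Then for every pay-only Groves mechanism r' = (r'_1,…,r'_n), we have r'_i(θ_{-i}) ≤ r_i(θ_{-i}) for all i and all θ_{-i}; consequently, r individually dominates every pay-only Groves mechanism that differs from r. -/
lemma DependsOn.apply_update_of_notMem {ι β : Type*} [DecidableEq ι] {α : ι → Type*}
    {f : (Π i, α i) → β} {s : Set ι} (hf : DependsOn f s) {i : ι} (hi : i ∉ s)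
    (x : Π i, α i) (b : α i) : f (Function.update x i b) = f x :=
  hf fun _ hj => Function.update_of_ne (ne_of_mem_of_not_mem hj hi) b x

lemma le_of_le_of_exists_update_eq {ι β : Type*} [DecidableEq ι] [Preorder β]
    {α : ι → Type*} {g r r' : (Π j, α j) → β} {i : ι}
    (hr : DependsOn r {i}ᶜ) (hr' : DependsOn r' {i}ᶜ) (hle : r' ≤ g)
    (htouch : ∀ x, ∃ b, g (Function.update x i b) = r (Function.update x i b)) : r' ≤ r := by
  intro x
  obtain ⟨b, hb⟩ := htouch x
  have hi : i ∉ ({i}ᶜ : Set ι) := fun h => h rfl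
  calc r' x = r' (Function.update x i b) := (hr'.apply_update_of_notMem hi x b).symm
    _ ≤ g (Function.update x i b) := hle _
    _ = r (Function.update x i b) := hb
    _ = r x := hr.apply_update_of_notMem hi x b

theorem stmt_17_general {n : ℕ} {D : Type} [Fintype D] [Nonempty D]
    {Θ : Fin n → Type}
    (v : ∀ i, D → Θ i → ℝ) (f : (∀ i, Θ i) → D)
    (r : ∀ _ : Fin n, (∀ j, Θ j) → ℝ)
    (hind : ∀ (i : Fin n) (θ θ' : ∀ j, Θ j),
      (∀ j, j ≠ i → θ j = θ' j) → r i θ = r i θ')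
    (hstar : ∀ (i : Fin n) (θ : ∀ j, Θ j), ∃ b : Θ i,
      VCGi v f i (Function.update θ i b) - r i (Function.update θ i b) = 0) :
    ∀ r' : ∀ _ : Fin n, (∀ j, Θ j) → ℝ,
      (∀ (i : Fin n) (θ θ' : ∀ j, Θ j),
        (∀ j, j ≠ i → θ j = θ' j) → r' i θ = r' i θ') →
      -- r' is pay-only
      (∀ (i : Fin n) (θ : ∀ j, Θ j), r' i θ ≤ VCGi v f i θ) →
      (∀ (i : Fin n) (θ : ∀ j, Θ j), r' i θ ≤ r i θ) ∧
      ((∃ (i : Fin n) (θ : ∀ j, Θ j), r' i θ ≠ r i θ) →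
        ((∀ (i : Fin n) (θ : ∀ j, Θ j), r' i θ ≤ r i θ) ∧
          (∃ (i : Fin n) (θ : ∀ j, Θ j), r' i θ < r i θ))) := by
  intro r' hind' hpay
  have hle : ∀ i θ, r' i θ ≤ r i θ := fun i =>
    le_of_le_of_exists_update_eq (fun _ _ => hind i _ _) (fun _ _ => hind' i _ _) (hpay i)
      fun θ => (hstar i θ).imp fun _ => sub_eq_zero.mp
  exact ⟨hle, fun ⟨i, θ, hne⟩ => ⟨hle, i, θ, (hle i θ).lt_of_ne hne⟩⟩

theorem stmt_17 {n : ℕ} (hn : 2 ≤ n) {D : Type} [Fintype D] [Nonempty D]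
    {Θ : Fin n → Type} [∀ i, Nonempty (Θ i)]
    (v : ∀ i, D → Θ i → ℝ) (f : (∀ i, Θ i) → D)
    (hf : ∀ (θ : ∀ j, Θ j) (d : D),
      ∑ i, v i d (θ i) ≤ ∑ i, v i (f θ) (θ i))
    (r : ∀ _ : Fin n, (∀ j, Θ j) → ℝ)
    (hind : ∀ (i : Fin n) (θ θ' : ∀ j, Θ j),
      (∀ j, j ≠ i → θ j = θ' j) → r i θ = r i θ')
    (hstar : ∀ (i : Fin n) (θ : ∀ j, Θ j), ∃ b : Θ i,
      VCGi v f i (Function.update θ i b) - r i (Function.update θ i b) = 0) :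
    ∀ r' : ∀ _ : Fin n, (∀ j, Θ j) → ℝ,
      (∀ (i : Fin n) (θ θ' : ∀ j, Θ j),
        (∀ j, j ≠ i → θ j = θ' j) → r' i θ = r' i θ') →
      -- r' is pay-only
      (∀ (i : Fin n) (θ : ∀ j, Θ j), r' i θ ≤ VCGi v f i θ) →
      (∀ (i : Fin n) (θ : ∀ j, Θ j), r' i θ ≤ r i θ) ∧
      ((∃ (i : Fin n) (θ : ∀ j, Θ j), r' i θ ≠ r i θ) →
        ((∀ (i : Fin n) (θ : ∀ j, Θ j), r' i θ ≤ r i θ) ∧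
          (∃ (i : Fin n) (θ : ∀ j, Θ j), r' i θ < r i θ))) :=
  stmt_17_general v f r hind hstar
end
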